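/- Let M be a monoid, K a field, μ₁,...,μₘ : M → K distinct nonzero multiplicative functions, b₁,...,bₘ ∈ K all nonzero, and J : {1,...,m} → {1,...,n} a surjection whose fibers all have at least 2 elements. Suppose f, g, h, h₁,...,hₙ : M → K satisfy f(xy) = g(x)h(y) + Σᵢ₌₁ᵐ bᵢμᵢ(x)h_{J(i)}(y) for all x, y ∈ M, with f ≠ 0, and suppose there exist constants v₁,...,vₙ ∈ K such that g = Σⱼ₌₁ⁿ vⱼ gⱼ, where gⱼ := Σ_{i ∈ J⁻¹({j})} bᵢμᵢ. Then a contradiction follows; i.e., no such solution exists (f must be 0). -/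

import Mathlib

/-!
Put `Gⱼ := vⱼ h + hⱼ`. Since `g = ∑ᵢ v_{J i} bᵢ μᵢ`, the equation becomes
`f(xy) = ∑ᵢ bᵢ μᵢ(x) G_{J i}(y)`. Comparing `f(x(yz))` with `f((xy)z)` and using the linear
independence of distinct nonzero multiplicative functions (Artin's lemma) gives
`G_{J i}(y) = μᵢ(y) G_{J i}(1)`. A fiber of `J` contains two indices `i ≠ i'`, so
`μᵢ G_j(1) = μᵢ' G_j(1)` with `μᵢ ≠ μᵢ'`, forcing `G_j(1) = 0`; then `f(x) = f(x · 1) = 0`.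
-/

section MultiplicativeFunctions

variable {M K : Type*}

theorem map_one_of_map_mul [Monoid M] [MulZeroOneClass K] [IsRightCancelMulZero K] {μ : M → K}
    (hmul : ∀ x y, μ (x * y) = μ x * μ y) (hne : μ ≠ 0) : μ 1 = 1 := by
  obtain ⟨x, hx⟩ := Function.ne_iff.mp hne
  exact (mul_eq_right₀ hx).mp (by rw [← hmul, one_mul])

theorem linearIndependent_of_map_mul [Monoid M] [CommRing K] [IsDomain K] {ι : Type*}
    {μ : ι → M → K} (hinj : Function.Injective μ)
    (hmul : ∀ i x y, μ i (x * y) = μ i x * μ i y) (hne : ∀ i, μ i ≠ 0) :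
    LinearIndependent K μ := by
  let φ : ι → M →* K := fun i =>
    { toFun := μ i, map_one' := map_one_of_map_mul (hmul i) (hne i), map_mul' := hmul i }
  have hφ : Function.Injective φ := fun i i' h => hinj (congrArg DFunLike.coe h)
  exact (linearIndependent_monoidHom M K).comp φ hφ

theorem apply_mul_eq_of_linearIndependent [Semigroup M] [CommRing K] {ι : Type*} [Fintype ι]
    {μ : ι → M → K} (hli : LinearIndependent K μ)
    (hmul : ∀ i x y, μ i (x * y) = μ i x * μ i y) {f : M → K} {F : ι → M → K}
    (heq : ∀ x y, f (x * y) = ∑ i, μ i x * F i y) (i : ι) (y z : M) :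
    F i (y * z) = μ i y * F i z := by
  have hzero : ∑ k, (F k (y * z) - μ k y * F k z) • μ k = 0 := by
    funext x
    rw [Finset.sum_apply]
    calc ∑ k, ((F k (y * z) - μ k y * F k z) • μ k) x
        = ∑ k, μ k x * F k (y * z) - ∑ k, μ k (x * y) * F k z := by
          simp only [Pi.smul_apply, smul_eq_mul, hmul, ← Finset.sum_sub_distrib]
          exact Finset.sum_congr rfl fun k _ => by ring
      _ = 0 := by rw [← heq, ← heq, mul_assoc, sub_self]
  exact sub_eq_zero.mp (Fintype.linearIndependent_iff.mp hli _ hzero i)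

end MultiplicativeFunctions

theorem sum_mul_sum_fiberwise {ι κ R : Type*} [Fintype ι] [Fintype κ] [DecidableEq κ]
    [CommSemiring R] (J : ι → κ) (v : κ → R) (a : ι → R) :
    ∑ j, v j * ∑ i ∈ Finset.univ.filter fun i => J i = j, a i = ∑ i, v (J i) * a i := by
  rw [← Finset.sum_fiberwise Finset.univ J fun i => v (J i) * a i]
  refine Finset.sum_congr rfl fun j _ => ?_
  rw [Finset.mul_sum]
  exact Finset.sum_congr rfl fun i hi => by rw [(Finset.mem_filter.mp hi).2]

theorem stmt_15_general {M : Type*} [Monoid M] {K : Type*} [Field K] {m n : ℕ}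
    (μ : Fin m → M → K)
    (hmul : ∀ i, ∀ x y : M, μ i (x * y) = μ i x * μ i y)
    (hdist : Function.Injective μ) (hne : ∀ i, μ i ≠ 0)
    (b : Fin m → K) (hb : ∀ i, b i ≠ 0)
    (J : Fin m → Fin n)
    (hfib : ∀ j, 2 ≤ (Finset.univ.filter fun i => J i = j).card)
    (f g h : M → K) (h' : Fin n → M → K)
    (heq : ∀ x y, f (x * y) = g x * h y + ∑ i, b i * μ i x * h' (J i) y)
    (hf : f ≠ 0)
    (v : Fin n → K)
    (hg : g = fun x => ∑ j, v j * ∑ i ∈ Finset.univ.filter fun i => J i = j, b i * μ i x) :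
    False := by
  set G : Fin n → M → K := fun j y => v j * h y + h' j y
  have hsum : ∀ x y, f (x * y) = ∑ i, μ i x * (b i * G (J i) y) := fun x y => by
    rw [heq, hg]
    dsimp only
    rw [sum_mul_sum_fiberwise, Finset.sum_mul, ← Finset.sum_add_distrib]
    exact Finset.sum_congr rfl fun i _ => by ring
  have hG : ∀ i y, G (J i) y = μ i y * G (J i) 1 := fun i y => by
    have := apply_mul_eq_of_linearIndependent
      (linearIndependent_of_map_mul hdist hmul hne) hmul hsum i y 1
    rw [mul_one, mul_left_comm] at this
    exact mul_left_cancel₀ (hb i) this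
  have hG1 : ∀ j, G j 1 = 0 := fun j => by
    obtain ⟨i, hi, i', hi', hii'⟩ := Finset.one_lt_card.mp (hfib j)
    have hJi := (Finset.mem_filter.mp hi).2
    have hJi' := (Finset.mem_filter.mp hi').2
    have hμ : ∀ y, μ i y * G j 1 = μ i' y * G j 1 := fun y => by
      rw [← hJi, ← hG, hJi, ← hJi', hG]
    by_contra hc
    exact hii' (hdist (funext fun y => mul_right_cancel₀ hc (hμ y)))
  exact hf (funext fun x => by simpa [hG1] using hsum x 1)

/-- Case 2 of Proposition 5: if `g` is a combination of the `gⱼ` with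
fiber-constant coefficients, then no solution with `f ≠ 0` exists. -/
theorem stmt_15 {M : Type*} [Monoid M] {K : Type*} [Field K] {m n : ℕ}
    (μ : Fin m → M → K)
    (hmul : ∀ i, ∀ x y : M, μ i (x * y) = μ i x * μ i y)
    (hdist : Function.Injective μ) (hne : ∀ i, μ i ≠ 0)
    (b : Fin m → K) (hb : ∀ i, b i ≠ 0)
    (J : Fin m → Fin n) (hJsurj : Function.Surjective J)
    (hfib : ∀ j, 2 ≤ (Finset.univ.filter fun i => J i = j).card)
    (f g h : M → K) (h' : Fin n → M → K)
    (heq : ∀ x y, f (x * y) = g x * h y + ∑ i, b i * μ i x * h' (J i) y)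
    (hf : f ≠ 0)
    (v : Fin n → K)
    (hg : g = fun x => ∑ j, v j * ∑ i ∈ Finset.univ.filter fun i => J i = j, b i * μ i x) :
    False :=
  stmt_15_general μ hmul hdist hne b hb J hfib f g h h' heq hf v hg
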